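/- arXiv:1607.02855 — 6 statements merged into one kernel-verified Lean document; each statement's English description precedes it below -/
import Mathlib

section
/- If {A_n} are non-trivial i.i.d. complex random variables with E[log⁺|A_0|] < ∞, then almost surely limsup_{n→∞} |A_n|^{1/n} = 1. -/
open MeasureTheory ProbabilityTheory Filter Topology
open scoped ENNReal

/-!
For `r > 1`, `P(|A n| > r ^ n) = P(log⁺ |A 0| > n log r)`, which is summable because `log⁺ |A 0|`
is integrable; by the first Borel–Cantelli lemma `|A n| ≤ r ^ n` eventually, so the limsup is
at most `1`. Conversely some `δ > 0` has `P(|A 0| ≥ δ) > 0`, so by the second Borel–Cantelli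
lemma `|A n| ≥ δ ≥ r ^ n` infinitely often for every `r < 1`.
-/

section NthRoot

variable {u : ℕ → ℝ}

lemma limsup_ofReal_rpow_inv_le_of_eventually_le_pow (hu : ∀ n, 0 ≤ u n) {r : ℝ} (hr : 0 ≤ r)
    (h : ∀ᶠ n in atTop, u n ≤ r ^ n) :
    limsup (fun n : ℕ => ENNReal.ofReal (u n ^ (1 / (n : ℝ)))) atTop ≤ ENNReal.ofReal r := by
  refine limsup_le_of_le (by isBoundedDefault) ?_
  filter_upwards [h, eventually_ne_atTop 0] with n hn hn0
  refine ENNReal.ofReal_le_ofReal ?_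
  calc u n ^ (1 / (n : ℝ)) ≤ (r ^ n) ^ (1 / (n : ℝ)) :=
        Real.rpow_le_rpow (hu n) hn (by positivity)
    _ = r := by rw [one_div, Real.pow_rpow_inv_natCast hr hn0]

lemma ofReal_le_limsup_ofReal_rpow_inv_of_frequently_pow_le {r : ℝ} (hr : 0 ≤ r)
    (h : ∃ᶠ n in atTop, r ^ n ≤ u n) :
    ENNReal.ofReal r ≤ limsup (fun n : ℕ => ENNReal.ofReal (u n ^ (1 / (n : ℝ)))) atTop := by
  refine le_limsup_of_frequently_le' ?_
  refine (h.and_eventually (eventually_ne_atTop 0)).mono fun n ⟨hn, hn0⟩ => ?_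
  refine ENNReal.ofReal_le_ofReal ?_
  calc r = (r ^ n) ^ (1 / (n : ℝ)) := by rw [one_div, Real.pow_rpow_inv_natCast hr hn0]
    _ ≤ u n ^ (1 / (n : ℝ)) := Real.rpow_le_rpow (by positivity) hn (by positivity)

lemma limsup_ofReal_rpow_inv_le_one (hu : ∀ n, 0 ≤ u n) {r : ℕ → ℝ}
    (hr : Tendsto r atTop (𝓝 1)) (h : ∀ k, ∀ᶠ n in atTop, u n ≤ r k ^ n) :
    limsup (fun n : ℕ => ENNReal.ofReal (u n ^ (1 / (n : ℝ)))) atTop ≤ 1 := by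
  refine ge_of_tendsto (by simpa using (ENNReal.continuous_ofReal.tendsto 1).comp hr) ?_
  filter_upwards [hr.eventually (eventually_gt_nhds zero_lt_one)] with k hk
  exact limsup_ofReal_rpow_inv_le_of_eventually_le_pow hu hk.le (h k)

lemma one_le_limsup_ofReal_rpow_inv {δ : ℝ} (hδ : 0 < δ) (h : ∃ᶠ n in atTop, δ ≤ u n) :
    1 ≤ limsup (fun n : ℕ => ENNReal.ofReal (u n ^ (1 / (n : ℝ)))) atTop := by
  have hlim : Tendsto (fun r : ℝ => ENNReal.ofReal r) (𝓝[<] 1) (𝓝 1) := by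
    simpa using (ENNReal.continuous_ofReal.tendsto 1).mono_left nhdsWithin_le_nhds
  refine le_of_tendsto hlim ?_
  filter_upwards [Ioo_mem_nhdsLT zero_lt_one] with r ⟨hr0, hr1⟩
  have hsmall : ∀ᶠ n in atTop, r ^ n ≤ δ :=
    (tendsto_pow_atTop_nhds_zero_of_lt_one hr0.le hr1).eventually (eventually_le_nhds hδ)
  exact ofReal_le_limsup_ofReal_rpow_inv_of_frequently_pow_le hr0.le
    ((h.and_eventually hsmall).mono fun n ⟨hn, hrn⟩ => hrn.trans hn)

end NthRoot

section Probability

variable {Ω E : Type*} [MeasurableSpace Ω] {μ : Measure Ω}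

lemma exists_pos_measure_le_norm [NormedAddCommGroup E] {f : Ω → E}
    (h : 0 < μ {ω | f ω ≠ 0}) : ∃ δ > 0, 0 < μ {ω | δ ≤ ‖f ω‖} := by
  have hunion : {ω | f ω ≠ 0} = ⋃ k : ℕ, {ω | 1 / (k + 1 : ℝ) ≤ ‖f ω‖} := by
    ext ω
    simp only [Set.mem_ofPred_eq, Set.mem_iUnion, ← norm_pos_iff]
    exact ⟨fun hω => (exists_nat_one_div_lt hω).imp fun _ => le_of_lt,
      fun ⟨k, hk⟩ => lt_of_lt_of_le (by positivity) hk⟩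
  obtain ⟨k, hk⟩ := exists_measure_pos_of_not_measure_iUnion_null (hunion ▸ h.ne')
  exact ⟨_, by positivity, hk⟩

lemma ae_eventually_norm_le_pow [IsProbabilityMeasure μ] [NormedAddCommGroup E] [MeasurableSpace E]
    [OpensMeasurableSpace E] {X : ℕ → Ω → E} (hident : ∀ n, IdentDistrib (X n) (X 0) μ μ)
    (hint : Integrable (fun ω => max (Real.log ‖X 0 ω‖) 0) μ) {r : ℝ} (hr : 1 < r) :
    ∀ᵐ ω ∂μ, ∀ᶠ n in atTop, ‖X n ω‖ ≤ r ^ n := by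
  have hlogr : 0 < Real.log r := Real.log_pos hr
  set Y : Ω → ℝ := fun ω => max (Real.log ‖X 0 ω‖) 0 / Real.log r
  have hsum : ∑' n : ℕ, μ {ω | (n : ℝ) < Y ω} < ∞ := by
    let : MeasureSpace Ω := ⟨μ⟩
    exact tsum_prob_mem_Ioi_lt_top (hint.div_const _) fun ω => by positivity
  have hbound : ∀ n : ℕ, μ {ω | r ^ n < ‖X n ω‖} ≤ μ {ω | (n : ℝ) < Y ω} := by
    intro n
    have hS : MeasurableSet {x : E | r ^ n < ‖x‖} :=
      (isOpen_lt continuous_const continuous_norm).measurableSet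
    refine ((hident n).measure_mem_eq hS).le.trans (measure_mono fun ω (hω : r ^ n < ‖X 0 ω‖) => ?_)
    have hlog : n * Real.log r < Real.log ‖X 0 ω‖ := by
      rw [← Real.log_pow]
      exact Real.log_lt_log (by positivity) hω
    show (n : ℝ) < Y ω
    rw [lt_div_iff₀ hlogr]
    exact hlog.trans_le (le_max_left _ _)
  filter_upwards [ae_eventually_notMem ((ENNReal.tsum_le_tsum hbound).trans_lt hsum).ne]
    with ω hω
  exact hω.mono fun n hn => not_lt.1 hn

lemma ae_frequently_mem_of_iIndepFun [IsProbabilityMeasure μ] [MeasurableSpace E] {X : ℕ → Ω → E}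
    (hmeas : ∀ n, Measurable (X n)) (hindep : iIndepFun X μ)
    (hident : ∀ n, IdentDistrib (X n) (X 0) μ μ) {S : Set E} (hS : MeasurableSet S)
    (hpos : 0 < μ (X 0 ⁻¹' S)) :
    ∀ᵐ ω ∂μ, ∃ᶠ n in atTop, X n ω ∈ S := by
  have hsm : ∀ n, MeasurableSet (X n ⁻¹' S) := fun n => hmeas n hS
  have hsets : iIndepSet (fun n => X n ⁻¹' S) μ :=
    (iIndepSet_iff_meas_biInter hsm).2 fun F =>
      hindep.measure_inter_preimage_eq_mul F fun _ _ => hS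
  have hsum : ∑' n, μ (X n ⁻¹' S) = ∞ := by
    simp_rw [fun n => (hident n).measure_mem_eq hS]
    exact ENNReal.tsum_const_eq_top_of_ne_zero hpos.ne'
  have hlimsup := measure_limsup_eq_one hsm hsets hsum
  filter_upwards [(ae_mem_iff_measure_eq
    (MeasurableSet.measurableSet_limsup hsm).nullMeasurableSet).2 (by rw [hlimsup, measure_univ])]
    with ω hω
  exact mem_limsup_iff_frequently_mem.1 hω

end Probability

/-- If `{A n}` are non-trivial i.i.d. complex random variables with `E[log⁺ |A 0|] < ∞`, then
almost surely `limsup |A n| ^ (1/n) = 1`. -/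
theorem stmt2 {Ω : Type*} [MeasurableSpace Ω] (μ : Measure Ω) [IsProbabilityMeasure μ]
    (A : ℕ → Ω → ℂ) (hmeas : ∀ n, Measurable (A n))
    (hindep : iIndepFun A μ)
    (hident : ∀ n, IdentDistrib (A n) (A 0) μ μ)
    (hnontriv : μ {ω | A 0 ω = 0} < 1)
    (hint : Integrable (fun ω => max (Real.log ‖A 0 ω‖) 0) μ) :
    ∀ᵐ ω ∂μ,
      Filter.limsup (fun n : ℕ => ENNReal.ofReal (‖A n ω‖ ^ (1 / (n : ℝ))))
        atTop = 1 := by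
  have hnonzero : 0 < μ {ω | A 0 ω ≠ 0} := by
    change 0 < μ (A 0 ⁻¹' {0})ᶜ
    rw [prob_compl_eq_one_sub (hmeas 0 (measurableSet_singleton 0))]
    exact tsub_pos_of_lt hnontriv
  obtain ⟨δ, hδ, hδpos⟩ := exists_pos_measure_le_norm hnonzero
  have hr : Tendsto (fun k : ℕ => 1 + 1 / (k + 1 : ℝ)) atTop (𝓝 1) := by
    simpa using tendsto_one_div_add_atTop_nhds_zero_nat.const_add (1 : ℝ)
  have hupper := ae_all_iff.2 fun k : ℕ =>
    ae_eventually_norm_le_pow hident hint (r := 1 + 1 / (k + 1 : ℝ)) (lt_add_of_pos_right _ (by positivity))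
  have hlower := ae_frequently_mem_of_iIndepFun hmeas hindep hident
    (isClosed_le continuous_const continuous_norm).measurableSet hδpos
  filter_upwards [hupper, hlower] with ω hω_up hω_low
  exact le_antisymm (limsup_ofReal_rpow_inv_le_one (fun n => norm_nonneg _) hr hω_up)
    (one_le_limsup_ofReal_rpow_inv hδ hω_low)
end

section
/- If {A_n} are non-trivial i.i.d. complex random variables with E[log⁺|A_0|] < ∞, then almost surely limsup_{n→∞} (max_{0≤k≤n} |A_k|)^{1/n} = 1. -/
/-!
The lower bound: by independence, `μ (A 0 = ⋯ = A (n-1) = 0) = μ (A 0 = 0) ^ n → 0`, so almost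
surely some `A k` is nonzero, and then the running maximum is eventually at least the constant
`‖A k‖ > 0`, whose `n`-th root tends to `1`.

The upper bound: `E[log⁺ ‖A 0‖] < ∞` gives `∑ₙ P(log⁺ ‖A n‖ > ε n) < ∞`, so by Borel–Cantelli
`log⁺ ‖A n‖ / n → 0` almost surely. Then eventually `‖A n‖ ≤ exp (ε n)`, hence also the running
maximum is eventually `≤ exp (ε n)`, and its `n`-th root has `limsup ≤ exp ε` for every `ε > 0`.
-/

open MeasureTheory ProbabilityTheory Filter Finset Real Topology

section Deterministic

lemma le_exp_posLog (x : ℝ) : x ≤ exp (log⁺ x) := by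
  rcases le_or_gt x 0 with hx | hx
  · exact hx.trans (exp_pos _).le
  · calc x = exp (log x) := (exp_log hx).symm
      _ ≤ exp (log⁺ x) := exp_le_exp.2 (le_max_right _ _)

lemma eventually_sup_range_le {x g : ℕ → ENNReal} (hx : ∀ n, x n ≠ ⊤) (hg : Monotone g)
    (hg_top : Tendsto g atTop (𝓝 ⊤)) (h : ∀ᶠ n in atTop, x n ≤ g n) :
    ∀ᶠ n in atTop, (range (n + 1)).sup x ≤ g n := by
  obtain ⟨N, hN⟩ := eventually_atTop.1 h
  have hD : (range N).sup x < ⊤ := (Finset.sup_lt_iff ENNReal.zero_lt_top).2 fun k _ =>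
    (hx k).lt_top
  filter_upwards [hg_top.eventually_const_le hD] with n hn
  refine Finset.sup_le fun k hk => ?_
  rcases lt_or_ge k N with hkN | hkN
  · exact (le_sup (mem_range.2 hkN)).trans hn
  · exact (hN k hkN).trans (hg (mem_range_succ_iff.1 hk))

lemma limsup_rpow_one_div_le_one (M : ℕ → ENNReal)
    (h : ∀ ε > 0, ∀ᶠ n : ℕ in atTop, M n ≤ ENNReal.ofReal (exp (ε * n))) :
    limsup (fun n : ℕ => M n ^ (1 / (n : ℝ))) atTop ≤ 1 := by
  have hε : ∀ ε > 0, limsup (fun n : ℕ => M n ^ (1 / (n : ℝ))) atTop ≤ ENNReal.ofReal (exp ε) := by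
    intro ε hε
    refine limsup_le_of_le (by isBoundedDefault) ?_
    filter_upwards [h ε hε, eventually_gt_atTop 0] with n hn hn0
    calc M n ^ (1 / (n : ℝ)) ≤ ENNReal.ofReal (exp (ε * n)) ^ (1 / (n : ℝ)) :=
          ENNReal.rpow_le_rpow hn (by positivity)
      _ = ENNReal.ofReal (exp ε) := by
          rw [ENNReal.ofReal_rpow_of_pos (exp_pos _), ← exp_mul]
          field_simp
  have hlim : Tendsto (fun ε => ENNReal.ofReal (exp ε)) (𝓝[>] 0) (𝓝 1) :=
    ((ENNReal.continuous_ofReal.comp continuous_exp).tendsto' 0 1 (by simp)).mono_left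
      nhdsWithin_le_nhds
  exact ge_of_tendsto hlim (eventually_nhdsWithin_of_forall hε)

lemma tendsto_ofReal_rpow_one_div {c : ℝ} (hc : 0 < c) :
    Tendsto (fun n : ℕ => ENNReal.ofReal c ^ (1 / (n : ℝ))) atTop (𝓝 1) := by
  have h : Tendsto (fun n : ℕ => c ^ (1 / (n : ℝ))) atTop (𝓝 1) := by
    simpa [Function.comp_def] using ((continuousAt_const_rpow hc.ne').tendsto).comp
      tendsto_one_div_atTop_nhds_zero_nat
  simpa [ENNReal.ofReal_rpow_of_pos hc] using (ENNReal.tendsto_ofReal h)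

variable (a : ℕ → ℝ)

lemma limsup_sup_range_rpow_le_one (h : Tendsto (fun n : ℕ => log⁺ (a n) / n) atTop (𝓝 0)) :
    limsup (fun n : ℕ => ((range (n + 1)).sup fun k => ENNReal.ofReal (a k)) ^ (1 / (n : ℝ)))
      atTop ≤ 1 := by
  refine limsup_rpow_one_div_le_one _ fun ε hε => ?_
  have hg : Monotone fun n : ℕ => ENNReal.ofReal (exp (ε * n)) := fun m n hmn =>
    ENNReal.ofReal_le_ofReal (exp_le_exp.2 (by gcongr))
  have hg_top : Tendsto (fun n : ℕ => ENNReal.ofReal (exp (ε * n))) atTop (𝓝 ⊤) :=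
    ENNReal.tendsto_ofReal_atTop.comp
      (tendsto_exp_atTop.comp (tendsto_natCast_atTop_atTop.const_mul_atTop hε))
  refine eventually_sup_range_le (fun _ => ENNReal.ofReal_ne_top) hg hg_top ?_
  filter_upwards [h.eventually (gt_mem_nhds hε), eventually_gt_atTop 0] with n hn hn0
  have hlog : log⁺ (a n) ≤ ε * n := by
    rw [div_lt_iff₀ (by positivity)] at hn
    exact hn.le
  exact ENNReal.ofReal_le_ofReal ((le_exp_posLog _).trans (exp_le_exp.2 hlog))

lemma one_le_limsup_sup_range_rpow {k : ℕ} (hk : 0 < a k) :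
    1 ≤ limsup (fun n : ℕ => ((range (n + 1)).sup fun k => ENNReal.ofReal (a k)) ^ (1 / (n : ℝ)))
      atTop := by
  rw [← (tendsto_ofReal_rpow_one_div hk).limsup_eq]
  refine limsup_le_limsup ?_
  filter_upwards [eventually_ge_atTop k] with n hn
  exact ENNReal.rpow_le_rpow (le_sup (f := fun k => ENNReal.ofReal (a k))
    (mem_range_succ_iff.2 hn)) (by positivity)

end Deterministic

section Probabilistic

variable {Ω : Type*} [MeasurableSpace Ω] {μ : Measure Ω}

lemma ae_exists_notMem_of_iIndepFun {β : Type*} [MeasurableSpace β] {X : ℕ → Ω → β}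
    (hindep : iIndepFun X μ) (hident : ∀ n, IdentDistrib (X n) (X 0) μ μ) {S : Set β}
    (hS : MeasurableSet S) (hS1 : μ (X 0 ⁻¹' S) < 1) :
    ∀ᵐ ω ∂μ, ∃ k, X k ω ∉ S := by
  have hpow : ∀ n, μ {ω | ∀ k, X k ω ∈ S} ≤ μ (X 0 ⁻¹' S) ^ n := fun n =>
    calc μ {ω | ∀ k, X k ω ∈ S}
        ≤ μ (⋂ i ∈ range n, X i ⁻¹' S) := measure_mono fun ω hω => Set.mem_iInter₂.2 fun i _ => hω i
      _ = ∏ i ∈ range n, μ (X i ⁻¹' S) :=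
          hindep.measure_inter_preimage_eq_mul (range n) (sets := fun _ => S) fun _ _ => hS
      _ = μ (X 0 ⁻¹' S) ^ n := by
          rw [prod_congr rfl fun i _ => (hident i).measure_mem_eq hS, prod_const, card_range]
  rw [ae_iff]
  simp only [not_exists, not_not]
  exact le_antisymm (ge_of_tendsto' (ENNReal.tendsto_pow_atTop_nhds_zero_of_lt_one hS1) hpow)
    zero_le

variable [IsProbabilityMeasure μ] {Y : ℕ → Ω → ℝ}

lemma ae_eventually_abs_le_mul_of_identDistrib (hident : ∀ n, IdentDistrib (Y n) (Y 0) μ μ)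
    (hint : Integrable (Y 0) μ) {ε : ℝ} (hε : 0 < ε) :
    ∀ᵐ ω ∂μ, ∀ᶠ n : ℕ in atTop, |Y n ω| ≤ ε * n := by
  let _ : MeasureSpace Ω := ⟨μ⟩
  have hsum : ∑' n : ℕ, μ {ω | |Y n ω| / ε ∈ Set.Ioi (n : ℝ)} ≠ ⊤ := by
    have hmeas : Measurable fun y : ℝ => |y| / ε := by fun_prop
    have hμ (n : ℕ) :
        μ {ω | |Y n ω| / ε ∈ Set.Ioi (n : ℝ)} = μ {ω | |Y 0 ω| / ε ∈ Set.Ioi (n : ℝ)} :=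
      ((hident n).comp hmeas).measure_mem_eq measurableSet_Ioi
    rw [tsum_congr hμ]
    exact (tsum_prob_mem_Ioi_lt_top (hint.abs.div_const ε) fun ω => by positivity).ne
  filter_upwards [ae_eventually_notMem hsum] with ω hω
  filter_upwards [hω] with n hn
  rwa [Set.mem_Ioi, not_lt, div_le_iff₀ hε, mul_comm] at hn

lemma ae_tendsto_div_natCast_zero_of_identDistrib (hident : ∀ n, IdentDistrib (Y n) (Y 0) μ μ)
    (hint : Integrable (Y 0) μ) :
    ∀ᵐ ω ∂μ, Tendsto (fun n : ℕ => Y n ω / n) atTop (𝓝 0) := by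
  have h := ae_all_iff.2 fun m : ℕ =>
    ae_eventually_abs_le_mul_of_identDistrib hident hint (ε := 1 / ((m : ℝ) + 1)) (by positivity)
  filter_upwards [h] with ω hω
  refine Metric.tendsto_nhds.2 fun ε hε => ?_
  obtain ⟨m, hm⟩ := exists_nat_one_div_lt hε
  filter_upwards [hω m, eventually_gt_atTop 0] with n hn hn0
  rw [Real.dist_eq, sub_zero, abs_div, Nat.abs_cast, div_lt_iff₀ (by positivity)]
  exact hn.trans_lt (mul_lt_mul_of_pos_right hm (by positivity))

end Probabilistic

theorem stmt3_general {Ω : Type*} [MeasurableSpace Ω] (μ : Measure Ω) [IsProbabilityMeasure μ]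
    (A : ℕ → Ω → ℂ)
    (hindep : iIndepFun A μ)
    (hident : ∀ n, IdentDistrib (A n) (A 0) μ μ)
    (hnontriv : μ {ω | A 0 ω = 0} < 1)
    (hint : Integrable (fun ω => max (Real.log ‖A 0 ω‖) 0) μ) :
    ∀ᵐ ω ∂μ,
      Filter.limsup
        (fun n : ℕ =>
          ((Finset.range (n + 1)).sup (fun k => ENNReal.ofReal ‖A k ω‖))
            ^ (1 / (n : ℝ)))
        atTop = 1 := by
  have hlog_ident : ∀ n, IdentDistrib (fun ω => log⁺ ‖A n ω‖) (fun ω => log⁺ ‖A 0 ω‖) μ μ :=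
    fun n => (hident n).comp (u := fun z : ℂ => log⁺ ‖z‖) (by fun_prop)
  have hlog_int : Integrable (fun ω => log⁺ ‖A 0 ω‖) μ := by
    simpa only [posLog_apply, max_comm] using hint
  filter_upwards [ae_exists_notMem_of_iIndepFun hindep hident (measurableSet_singleton 0) hnontriv,
    ae_tendsto_div_natCast_zero_of_identDistrib hlog_ident hlog_int] with ω ⟨k, hk⟩ hlog
  exact le_antisymm (limsup_sup_range_rpow_le_one _ hlog)
    (one_le_limsup_sup_range_rpow _ (norm_pos_iff.2 hk))

/-- If `{A n}` are non-trivial i.i.d. complex random variables with `E[log⁺ |A 0|] < ∞`, then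
almost surely `limsup (max_{0 ≤ k ≤ n} |A k|) ^ (1/n) = 1`. -/
theorem stmt3 {Ω : Type*} [MeasurableSpace Ω] (μ : Measure Ω) [IsProbabilityMeasure μ]
    (A : ℕ → Ω → ℂ) (hmeas : ∀ n, Measurable (A n))
    (hindep : iIndepFun A μ)
    (hident : ∀ n, IdentDistrib (A n) (A 0) μ μ)
    (hnontriv : μ {ω | A 0 ω = 0} < 1)
    (hint : Integrable (fun ω => max (Real.log ‖A 0 ω‖) 0) μ) :
    ∀ᵐ ω ∂μ,
      Filter.limsup
        (fun n : ℕ =>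
          ((Finset.range (n + 1)).sup (fun k => ENNReal.ofReal ‖A k ω‖))
            ^ (1 / (n : ℝ)))
        atTop = 1 :=
  stmt3_general μ A hindep hident hnontriv hint
end

section
/- For a sequence of nonnegative reals a_n, if limsup_{n→∞} a_n^{1/n} = 1 then limsup_{n→∞} (max_{0≤k≤n} a_k)^{1/n} = 1. -/
open Filter Finset
open scoped ENNReal

/-!
Write `M n = max_{k ≤ n} a k`. Since `a n ≤ M n`, the limsup can only grow. Conversely, for any
`c > 1` above the limsup of `a n ^ (1/n)`, eventually `a n ≤ c ^ n`; the finitely many earlier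
terms are finite, so they too lie below `c ^ n` for large `n` because `c ^ n → ∞`. As `c ^ n` is
increasing, this gives `M n ≤ c ^ n` eventually, i.e. `M n ^ (1/n) ≤ c`.
-/

theorem ENNReal.rpow_one_div_natCast_le_iff {x y : ℝ≥0∞} {n : ℕ} (hn : n ≠ 0) :
    x ^ (1 / (n : ℝ)) ≤ y ↔ x ≤ y ^ n := by
  rw [one_div, ENNReal.rpow_inv_le_iff (by positivity), ENNReal.rpow_natCast]

theorem eventually_sup_range_le_pow {b : ℕ → ℝ≥0∞} (hb : ∀ k, b k ≠ ∞) {c : ℝ≥0∞} (hc : 1 < c)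
    (h : ∀ᶠ n in atTop, b n ≤ c ^ n) : ∀ᶠ n in atTop, (range (n + 1)).sup b ≤ c ^ n := by
  obtain ⟨N, hN⟩ := eventually_atTop.mp h
  have hB : (range N).sup b < ∞ :=
    (Finset.sup_lt_iff bot_lt_top).2 fun k _ => (hb k).lt_top
  have hBpow : ∀ᶠ n in atTop, (range N).sup b < c ^ n :=
    (ENNReal.tendsto_pow_atTop_nhds_top_iff.2 hc).eventually (lt_mem_nhds hB)
  filter_upwards [hBpow] with n hBn
  refine Finset.sup_le fun k hk => ?_
  rcases lt_or_ge k N with hkN | hkN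
  · exact (le_sup (mem_range.2 hkN)).trans hBn.le
  · exact (hN k hkN).trans (pow_le_pow_right₀ hc.le (mem_range_succ_iff.1 hk))

theorem limsup_rpow_le_limsup_sup_range_rpow (b : ℕ → ℝ≥0∞) :
    limsup (fun n : ℕ => b n ^ (1 / (n : ℝ))) atTop ≤
      limsup (fun n : ℕ => (range (n + 1)).sup b ^ (1 / (n : ℝ))) atTop :=
  limsup_le_limsup (Eventually.of_forall fun n =>
    ENNReal.rpow_le_rpow (le_sup (self_mem_range_succ n)) (by positivity))

theorem limsup_sup_range_rpow_le {b : ℕ → ℝ≥0∞} (hb : ∀ k, b k ≠ ∞) :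
    limsup (fun n : ℕ => (range (n + 1)).sup b ^ (1 / (n : ℝ))) atTop ≤
      max (limsup (fun n : ℕ => b n ^ (1 / (n : ℝ))) atTop) 1 := by
  refine le_of_forall_gt_imp_ge_of_dense fun c hc => ?_
  rw [max_lt_iff] at hc
  have hpow : ∀ᶠ n in atTop, b n ≤ c ^ n := by
    filter_upwards [eventually_lt_of_limsup_lt hc.1, eventually_ne_atTop 0] with n hn hn0
    exact (ENNReal.rpow_one_div_natCast_le_iff hn0).1 hn.le
  refine limsup_le_of_le (by isBoundedDefault) ?_
  filter_upwards [eventually_sup_range_le_pow hb hc.2 hpow, eventually_ne_atTop 0] with n hn hn0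
  exact (ENNReal.rpow_one_div_natCast_le_iff hn0).2 hn

/-- For a sequence of nonnegative reals `a n`, if `limsup (a n) ^ (1/n) = 1` then
`limsup (max_{0 ≤ k ≤ n} a k) ^ (1/n) = 1`. -/
theorem stmt4 (a : ℕ → ℝ) (ha : ∀ n, 0 ≤ a n)
    (h : Filter.limsup (fun n : ℕ => ENNReal.ofReal ((a n) ^ (1 / (n : ℝ)))) atTop = 1) :
    Filter.limsup
      (fun n : ℕ =>
        ((Finset.range (n + 1)).sup (fun k => ENNReal.ofReal (a k))) ^ (1 / (n : ℝ)))
      atTop = 1 := by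
  have hofReal : (fun n : ℕ => ENNReal.ofReal ((a n) ^ (1 / (n : ℝ)))) =
      fun n : ℕ => ENNReal.ofReal (a n) ^ (1 / (n : ℝ)) :=
    funext fun n => (ENNReal.ofReal_rpow_of_nonneg (ha n) (by positivity)).symm
  rw [hofReal] at h
  refine le_antisymm ?_ ?_
  · exact (limsup_sup_range_rpow_le fun _ => ENNReal.ofReal_ne_top).trans_eq (by rw [h, max_self])
  · exact h ▸ limsup_rpow_le_limsup_sup_range_rpow _
end

section
/- If {A_n} are non-trivial i.i.d. complex random variables, then there exists b > 0 such that almost surely liminf_{n→∞} (max_{n - b·log n < k ≤ n} |A_k|)^{1/n} ≥ 1. -/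
open MeasureTheory ProbabilityTheory Filter
open scoped Classical

/-!
Fix `δ > 0` with `q := P(|A₀| < δ) < 1` and choose `b` with `q ^ (b log n) ≤ n⁻²`. By independence
the event that all `|A k|`, `n - b log n < k ≤ n`, are below `δ` has probability about
`q ^ (b log n)`, which is summable, so by Borel–Cantelli almost surely each late window contains
some `|A k| ≥ δ`. Then the `n`-th root of the window maximum is at least `δ ^ (1/n) → 1`.
-/

open Real in
lemma Real.summable_pow_floor_mul_log {r : ℝ} (hr0 : 0 < r) (hr1 : r < 1) :
    Summable fun n : ℕ => r ^ ⌊2 / -log r * log n⌋₊ := by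
  set b := 2 / -log r
  have hb : log r * b = -2 := by
    have hlog := (log_neg hr0 hr1).ne
    simp only [b]
    field_simp
  refine ((summable_nat_rpow.2 (by norm_num : (-2 : ℝ) < -1)).mul_left r⁻¹)
    |>.of_norm_bounded_eventually_nat ?_
  filter_upwards [eventually_ge_atTop 1] with n hn
  have hn0 : (0 : ℝ) < n := by exact_mod_cast hn
  rw [norm_of_nonneg (by positivity)]
  calc r ^ ⌊b * log n⌋₊ = r ^ (⌊b * log n⌋₊ : ℝ) := (rpow_natCast _ _).symm
    _ ≤ r ^ (b * log n - 1) := rpow_le_rpow_of_exponent_ge hr0 hr1.le (Nat.sub_one_lt_floor _).le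
    _ = r⁻¹ * n ^ (-2 : ℝ) := by
      rw [rpow_sub hr0, rpow_one, div_eq_inv_mul, rpow_def_of_pos hr0, rpow_def_of_pos hn0]
      congr 2
      linear_combination log n * hb

lemma ENNReal.exists_pos_tsum_pow_floor_mul_log_ne_top {q : ENNReal} (hq : q < 1) :
    ∃ b : ℝ, 0 < b ∧ ∑' n : ℕ, q ^ ⌊b * Real.log n⌋₊ ≠ ⊤ := by
  -- `r` is kept away from `0`, where `Real.log` takes the junk value `0`.
  set r := max q.toReal (1 / 2)
  have hr0 : 0 < r := lt_max_of_lt_right (by norm_num)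
  have hr1 : r < 1 := max_lt (toReal_lt_of_lt_ofReal (by simpa using hq)) (by norm_num)
  have hqr : q ≤ ENNReal.ofReal r :=
    (ofReal_toReal hq.ne_top).symm.le.trans (ofReal_le_ofReal (le_max_left _ _))
  refine ⟨2 / -Real.log r, div_pos two_pos (neg_pos.2 (Real.log_neg hr0 hr1)), ?_⟩
  refine ne_top_of_le_ne_top ?_ (ENNReal.tsum_le_tsum fun n =>
    (pow_le_pow_left' hqr _).trans_eq (ofReal_pow hr0.le _).symm)
  rw [← ofReal_tsum_of_nonneg (fun n => by positivity) (Real.summable_pow_floor_mul_log hr0 hr1)]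
  exact ofReal_ne_top

lemma ENNReal.tsum_pow_min_ne_top {q : ENNReal} (hq : q < 1) {m : ℕ → ℕ}
    (hm : ∑' n, q ^ m n ≠ ⊤) : ∑' n, q ^ min (m n) n ≠ ⊤ := by
  have hle : ∀ n, q ^ min (m n) n ≤ q ^ m n + q ^ n := fun n => by
    rcases min_choice (m n) n with h | h <;> rw [h]
    exacts [le_self_add, le_add_self]
  refine ne_top_of_le_ne_top ?_ (ENNReal.tsum_le_tsum hle)
  rw [ENNReal.tsum_add, tsum_geometric]
  exact add_ne_top.2 ⟨hm, inv_ne_top.2 (tsub_pos_of_lt hq).ne'⟩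

namespace ProbabilityTheory

variable {Ω E : Type*} [MeasurableSpace Ω] [MeasurableSpace E] {μ : Measure Ω}

lemma exists_pos_measure_norm_lt_lt_one [IsProbabilityMeasure μ] [NormedAddCommGroup E]
    [OpensMeasurableSpace E] {X : Ω → E} (hX : AEMeasurable X μ)
    (h : μ {ω | X ω = 0} < 1) : ∃ δ > 0, μ {ω | ‖X ω‖ < δ} < 1 := by
  by_contra! hall
  have hsmall : ∀ n : ℕ, ∀ᵐ ω ∂μ, ‖X ω‖ < 1 / (n + 1) := fun n => by
    rw [ae_iff_measure_eq (nullMeasurableSet_lt hX.norm aemeasurable_const), measure_univ]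
    exact le_antisymm prob_le_one (hall _ (by positivity))
  have hzero : ∀ᵐ ω ∂μ, X ω = 0 := by
    filter_upwards [ae_all_iff.2 hsmall] with ω hω
    by_contra hne
    obtain ⟨n, hn⟩ := exists_nat_one_div_lt (norm_pos_iff.2 hne)
    exact lt_asymm hn (hω n)
  rw [ae_iff_measure_eq (p := (X · = 0)) (hX.nullMeasurable (measurableSet_singleton 0)),
    measure_univ] at hzero
  exact h.ne hzero

lemma iIndepFun.measure_biInter_preimage_eq_pow {ι Ω' : Type*} [MeasurableSpace Ω']
    {ν : Measure Ω'} {A : ι → Ω → E} {X : Ω' → E} (hindep : iIndepFun A μ)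
    (hident : ∀ i, IdentDistrib (A i) X μ ν) {B : Set E} (hB : MeasurableSet B) (S : Finset ι) :
    μ (⋂ i ∈ S, A i ⁻¹' B) = ν (X ⁻¹' B) ^ S.card := by
  rw [hindep.meas_biInter fun i _ => ⟨B, hB, rfl⟩, Finset.prod_congr rfl fun i _ =>
    (hident i).measure_mem_eq hB, Finset.prod_const]

lemma iIndepFun.ae_eventually_exists_mem_Ioc_notMem {Ω' : Type*} [MeasurableSpace Ω']
    {ν : Measure Ω'} {A : ℕ → Ω → E} {X : Ω' → E} (hindep : iIndepFun A μ)
    (hident : ∀ n, IdentDistrib (A n) X μ ν) {B : Set E} (hB : MeasurableSet B) {m : ℕ → ℕ}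
    (hm : ∑' n, ν (X ⁻¹' B) ^ min (m n) n ≠ ⊤) :
    ∀ᵐ ω ∂μ, ∀ᶠ n in atTop, ∃ k ∈ Finset.Ioc (n - m n) n, A k ω ∉ B := by
  have hμ : ∀ n, μ (⋂ k ∈ Finset.Ioc (n - m n) n, A k ⁻¹' B) = ν (X ⁻¹' B) ^ min (m n) n :=
    fun n => by
      rw [hindep.measure_biInter_preimage_eq_pow hident hB, Nat.card_Ioc, Nat.sub_sub_eq_min,
        min_comm]
  filter_upwards [ae_eventually_notMem (s := fun n => ⋂ k ∈ Finset.Ioc (n - m n) n, A k ⁻¹' B)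
    (by simpa only [hμ] using hm)] with ω hω
  filter_upwards [hω] with n hn
  simpa only [Set.mem_iInter₂, Set.mem_preimage, not_forall, exists_prop] using hn

end ProbabilityTheory

lemma Finset.Ioc_sub_floor_subset_filter {x : ℝ} (hx : 0 ≤ x) (n : ℕ) :
    Finset.Ioc (n - ⌊x⌋₊) n ⊆ (Finset.range (n + 1)).filter (fun k : ℕ => (n : ℝ) - x < k) := by
  intro k hk
  rw [Finset.mem_Ioc] at hk
  rw [Finset.mem_filter, Finset.mem_range]
  refine ⟨Nat.lt_succ_of_le hk.2, ?_⟩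
  have h1 : (n : ℝ) ≤ ↑(n - ⌊x⌋₊) + ⌊x⌋₊ := by exact_mod_cast le_tsub_add
  have h2 : ((n - ⌊x⌋₊ : ℕ) : ℝ) < k := by exact_mod_cast hk.1
  linarith [Nat.floor_le hx]

lemma ENNReal.tendsto_ofReal_rpow_one_div_natCast {δ : ℝ} (hδ : 0 < δ) :
    Tendsto (fun n : ℕ => ENNReal.ofReal δ ^ (1 / (n : ℝ))) atTop (nhds 1) := by
  simp_rw [ofReal_rpow_of_pos hδ]
  have h : Tendsto (fun n : ℕ => δ ^ (1 / (n : ℝ))) atTop (nhds 1) := by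
    simpa [Function.comp_def] using (Real.continuousAt_const_rpow hδ.ne').tendsto.comp
      tendsto_one_div_atTop_nhds_zero_nat
  simpa using ENNReal.tendsto_ofReal h

theorem stmt5_general {Ω : Type*} [MeasurableSpace Ω] (μ : Measure Ω) [IsProbabilityMeasure μ]
    (A : ℕ → Ω → ℂ)
    (hindep : iIndepFun A μ)
    (hident : ∀ n, IdentDistrib (A n) (A 0) μ μ)
    (hnontriv : μ {ω | A 0 ω = 0} < 1) :
    ∃ b : ℝ, 0 < b ∧ ∀ᵐ ω ∂μ,
      1 ≤ Filter.liminf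
        (fun n : ℕ =>
          (((Finset.range (n + 1)).filter
              (fun k : ℕ => (n : ℝ) - b * Real.log n < (k : ℝ))).sup
            (fun k : ℕ => ENNReal.ofReal (‖A k ω‖))) ^ (1 / (n : ℝ)))
        atTop := by
  obtain ⟨δ, hδ, hq⟩ := exists_pos_measure_norm_lt_lt_one (hident 0).aemeasurable_fst hnontriv
  obtain ⟨b, hb, hsum⟩ := ENNReal.exists_pos_tsum_pow_floor_mul_log_ne_top hq
  have hB : MeasurableSet {z : ℂ | ‖z‖ < δ} := measurableSet_lt measurable_norm measurable_const
  refine ⟨b, hb, ?_⟩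
  filter_upwards [hindep.ae_eventually_exists_mem_Ioc_notMem hident hB
    (ENNReal.tsum_pow_min_ne_top hq hsum)] with ω hω
  calc 1 = liminf (fun n : ℕ => ENNReal.ofReal δ ^ (1 / (n : ℝ))) atTop :=
        (ENNReal.tendsto_ofReal_rpow_one_div_natCast hδ).liminf_eq.symm
    _ ≤ _ := liminf_le_liminf <| hω.mono fun n ⟨k, hk, hkδ⟩ => ENNReal.rpow_le_rpow
        (Finset.le_sup_of_le (Finset.Ioc_sub_floor_subset_filter
          (mul_nonneg hb.le (Real.log_natCast_nonneg n)) n hk)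
          (ENNReal.ofReal_le_ofReal (not_lt.1 hkδ))) (by positivity)

/-- If `{A n}` are non-trivial i.i.d. complex random variables, then there exists `b > 0` such
that almost surely `liminf (max_{n - b log n < k ≤ n} |A k|) ^ (1/n) ≥ 1`. -/
theorem stmt5 {Ω : Type*} [MeasurableSpace Ω] (μ : Measure Ω) [IsProbabilityMeasure μ]
    (A : ℕ → Ω → ℂ) (hmeas : ∀ n, Measurable (A n))
    (hindep : iIndepFun A μ)
    (hident : ∀ n, IdentDistrib (A n) (A 0) μ μ)
    (hnontriv : μ {ω | A 0 ω = 0} < 1) :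
    ∃ b : ℝ, 0 < b ∧ ∀ᵐ ω ∂μ,
      1 ≤ Filter.liminf
        (fun n : ℕ =>
          (((Finset.range (n + 1)).filter
              (fun k : ℕ => (n : ℝ) - b * Real.log n < (k : ℝ))).sup
            (fun k : ℕ => ENNReal.ofReal (‖A k ω‖))) ^ (1 / (n : ℝ)))
        atTop :=
  stmt5_general μ A hindep hident hnontriv
end

section
/- If {A_n} are non-trivial i.i.d. complex random variables, then almost surely it is not the case that there exist c, q ∈ (0,1) and a subsequence n_m → ∞ with |A_n| ≤ q^n for all n with c·n_m ≤ n ≤ n_m (Hadamard–Ostrowski gaps). -/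
/-!
Fix `ε > 0` with `p := P(‖A₀‖ ≤ ε) < 1`. By independence, the probability that `‖Aₙ‖ ≤ ε` on the
whole window `N - N / D ≤ n ≤ N` is `p ^ (N / D + 1)`, which is summable in `N`; by Borel–Cantelli,
almost surely every late window contains some `n` with `‖Aₙ‖ > ε`. A gap `c·n_m ≤ n ≤ n_m` contains
such a window once `c ≤ 1 - 1/D`, and on it `‖Aₙ‖ ≤ qⁿ < ε` as soon as `c·n_m` is large.
-/

open MeasureTheory ProbabilityTheory Filter Topology Metric Finset
open scoped ENNReal

lemma ENNReal.tsum_pow_div (p : ℝ≥0∞) (D : ℕ) [NeZero D] :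
    ∑' N : ℕ, p ^ (N / D) = D * (1 - p)⁻¹ := by
  rw [← (Nat.divModEquiv D).symm.tsum_eq, ← ENNReal.tsum_geometric, ← ENNReal.tsum_mul_left]
  have hdiv : ∀ x : ℕ × Fin D, (Nat.divModEquiv D).symm x / D = x.1 := fun x => by
    rw [Nat.divModEquiv_symm_apply, mul_comm, Nat.mul_add_div (NeZero.pos D),
      Nat.div_eq_of_lt x.2.is_lt, add_zero]
  simp only [hdiv, ENNReal.tsum_prod', tsum_fintype, sum_const, card_univ, Fintype.card_fin,
    nsmul_eq_mul]

lemma tendsto_measure_preimage_closedBall_zero {Ω E : Type*} [MeasurableSpace Ω]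
    {μ : Measure Ω} [IsFiniteMeasure μ] [NormedAddCommGroup E] [MeasurableSpace E]
    [OpensMeasurableSpace E] {X : Ω → E} (hX : AEMeasurable X μ) :
    Tendsto (fun ε => μ (X ⁻¹' closedBall 0 ε)) (𝓝[>] 0) (𝓝 (μ {ω | X ω = 0})) := by
  have hinter : ⋂ ε > (0 : ℝ), X ⁻¹' closedBall 0 ε = {ω | X ω = 0} := by
    ext ω
    simp only [Set.mem_iInter, Set.mem_preimage, mem_closedBall_zero_iff, Set.mem_ofPred_eq]
    exact ⟨fun h => norm_le_zero_iff.1 (le_of_forall_pos_le_add fun ε hε => by simpa using h ε hε),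
      fun h ε hε => by simp [h, hε.le]⟩
  rw [← hinter]
  exact tendsto_measure_biInter_gt (fun ε _ => hX.nullMeasurable measurableSet_closedBall)
    (fun _ _ _ hij => Set.preimage_mono (closedBall_subset_closedBall hij))
    ⟨1, one_pos, measure_ne_top μ _⟩

lemma ProbabilityTheory.iIndepFun.ae_eventually_exists_mem_Icc_notMem {Ω β : Type*}
    [MeasurableSpace Ω] {μ : Measure Ω} [MeasurableSpace β] {A : ℕ → Ω → β}
    (hindep : iIndepFun A μ) (hident : ∀ n, IdentDistrib (A n) (A 0) μ μ)
    {B : Set β} (hB : MeasurableSet B) (hp : μ (A 0 ⁻¹' B) < 1) (D : ℕ) [NeZero D] :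
    ∀ᵐ ω ∂μ, ∀ᶠ N in atTop, ∃ n ∈ Icc (N - N / D) N, A n ω ∉ B := by
  have hwindow : ∀ N, μ (⋂ n ∈ Icc (N - N / D) N, A n ⁻¹' B) ≤ μ (A 0 ⁻¹' B) ^ (N / D) := by
    intro N
    rw [hindep.meas_biInter fun n _ => ⟨B, hB, rfl⟩,
      prod_congr rfl fun n _ => (hident n).measure_mem_eq hB, prod_const, Nat.card_Icc]
    exact pow_le_pow_of_le_one zero_le hp.le (by have := Nat.div_le_self N D; omega)
  have hsum : ∑' N, μ (⋂ n ∈ Icc (N - N / D) N, A n ⁻¹' B) ≠ ∞ :=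
    ne_top_of_le_ne_top (ENNReal.tsum_pow_div _ D ▸ ENNReal.mul_ne_top
      (ENNReal.natCast_ne_top D) (ENNReal.inv_ne_top.2 (tsub_pos_of_lt hp).ne'))
      (ENNReal.tsum_le_tsum hwindow)
  filter_upwards [ae_eventually_notMem hsum] with ω hω
  simpa only [Set.mem_iInter, Set.mem_preimage, not_forall, exists_prop] using hω

lemma exists_mul_le_sub_div {c : ℝ} (hc : c < 1) :
    ∃ D : ℕ, D ≠ 0 ∧ ∀ N : ℕ, c * N ≤ ((N - N / D : ℕ) : ℝ) := by
  obtain ⟨D, hD⟩ := exists_nat_gt (1 / (1 - c))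
  have hc' : 0 < 1 - c := sub_pos.2 hc
  have hD0 : (0 : ℝ) < D := (one_div_pos.2 hc').trans hD
  refine ⟨D, by exact_mod_cast hD0.ne', fun N => ?_⟩
  have hDc : (N : ℝ) / D ≤ (1 - c) * N := by
    rw [div_le_iff₀ hD0]
    rw [div_lt_iff₀ hc'] at hD
    nlinarith [(N.cast_nonneg : (0 : ℝ) ≤ N)]
  rw [Nat.cast_sub (Nat.div_le_self N D)]
  linarith [(Nat.cast_div_le : ((N / D : ℕ) : ℝ) ≤ N / D)]

lemma not_frequently_le_pow_of_eventually_window {a : ℕ → ℝ} {ε c q : ℝ} (hε : 0 < ε)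
    (hc : c ∈ Set.Ioo (0 : ℝ) 1) (hq : q ∈ Set.Ioo (0 : ℝ) 1)
    (hwin : ∀ D : ℕ, D ≠ 0 → ∀ᶠ N in atTop, ∃ n ∈ Icc (N - N / D) N, ε < a n) :
    ¬ ∃ᶠ N : ℕ in atTop, ∀ n : ℕ, c * N ≤ n → n ≤ N → a n ≤ q ^ n := by
  intro hgap
  obtain ⟨D, hD0, hD⟩ := exists_mul_le_sub_div hc.2
  obtain ⟨n₀, hn₀⟩ := eventually_atTop.1
    ((tendsto_pow_atTop_nhds_zero_of_lt_one hq.1.le hq.2).eventually (gt_mem_nhds hε))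
  have hsmall : ∀ᶠ N : ℕ in atTop, ∀ n : ℕ, c * N ≤ n → q ^ n < ε :=
    (tendsto_natCast_atTop_atTop.const_mul_atTop hc.1).eventually_ge_atTop (n₀ : ℝ) |>.mono
      fun N hN n hn => hn₀ n (by exact_mod_cast hN.trans hn)
  obtain ⟨N, hN, ⟨n, hn, hεn⟩, hqn⟩ := (hgap.and_eventually ((hwin D hD0).and hsmall)).exists
  rw [mem_Icc] at hn
  have hcn : c * N ≤ n := (hD N).trans (by exact_mod_cast hn.1)
  linarith [hN n hcn hn.2, hqn n hcn]

theorem stmt7_general {Ω : Type*} [MeasurableSpace Ω] (μ : Measure Ω) [IsProbabilityMeasure μ]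
    (A : ℕ → Ω → ℂ)
    (hindep : iIndepFun A μ)
    (hident : ∀ n, IdentDistrib (A n) (A 0) μ μ)
    (hnontriv : μ {ω | A 0 ω = 0} < 1) :
    ∀ᵐ ω ∂μ, ¬ ∃ (c q : ℝ) (nm : ℕ → ℕ),
      c ∈ Set.Ioo (0 : ℝ) 1 ∧ q ∈ Set.Ioo (0 : ℝ) 1 ∧ StrictMono nm ∧
      ∀ m : ℕ, ∀ n : ℕ, c * (nm m : ℝ) ≤ (n : ℝ) → n ≤ nm m →
        ‖A n ω‖ ≤ q ^ n := by
  obtain ⟨ε, hεμ, hε⟩ := (((tendsto_measure_preimage_closedBall_zero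
    (hident 0).aemeasurable_fst).eventually (gt_mem_nhds hnontriv)).and
      self_mem_nhdsWithin).exists
  have hwin : ∀ᵐ ω ∂μ, ∀ D : ℕ, D ≠ 0 →
      ∀ᶠ N in atTop, ∃ n ∈ Icc (N - N / D) N, ε < ‖A n ω‖ := by
    refine ae_all_iff.2 fun D => ?_
    rcases eq_or_ne D 0 with rfl | hD
    · exact ae_of_all _ fun _ h => absurd rfl h
    have : NeZero D := ⟨hD⟩
    filter_upwards [hindep.ae_eventually_exists_mem_Icc_notMem hident measurableSet_closedBall
      hεμ D] with ω hω _
    simpa using hω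
  filter_upwards [hwin] with ω hω
  rintro ⟨c, q, nm, hc, hq, hnm, hgap⟩
  refine not_frequently_le_pow_of_eventually_window hε hc hq hω (frequently_atTop.2 fun M => ?_)
  exact ⟨nm M, hnm.le_apply, hgap M⟩

/-- If `{A n}` are non-trivial i.i.d. complex random variables, then almost surely there are no
Hadamard–Ostrowski gaps: it is not the case that there exist `c, q ∈ (0,1)` and a strictly
increasing sequence `n_m` with `|A n| ≤ q^n` for all `n` with `c·n_m ≤ n ≤ n_m`. -/
theorem stmt7 {Ω : Type*} [MeasurableSpace Ω] (μ : Measure Ω) [IsProbabilityMeasure μ]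
    (A : ℕ → Ω → ℂ) (hmeas : ∀ n, Measurable (A n))
    (hindep : iIndepFun A μ)
    (hident : ∀ n, IdentDistrib (A n) (A 0) μ μ)
    (hnontriv : μ {ω | A 0 ω = 0} < 1) :
    ∀ᵐ ω ∂μ, ¬ ∃ (c q : ℝ) (nm : ℕ → ℕ),
      c ∈ Set.Ioo (0 : ℝ) 1 ∧ q ∈ Set.Ioo (0 : ℝ) 1 ∧ StrictMono nm ∧
      ∀ m : ℕ, ∀ n : ℕ, c * (nm m : ℝ) ≤ (n : ℝ) → n ≤ nm m →
        ‖A n ω‖ ≤ q ^ n :=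
  stmt7_general μ A hindep hident hnontriv
end

section
/- Let c_1 ≥ c_2 > 0, ρ ∈ (0,1), and n ∈ ℕ with n large. Suppose a ≥ ((c_2 + 2c_1)/(c_2 ρ))^n and 1 ≤ a_k ≤ a^{k/n} for 1 ≤ k ≤ n−1, and a_0 < (√n/2)(c_2/c_1)·((c_2+2c_1)/c_2)^n. Then c_1√n·(a_0·(c_2/c_1)(1/√n) + ∑_{k=1}^{n−1} (aρ^n)^{k/n}) < c_2√n·aρ^n. -/
/-!
Put `x = aρⁿ` and `y = x^(1/n)`. The hypothesis on `a` gives `y ≥ 1 + 2c₁/c₂`, so the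
geometric sum `∑_{k=1}^{n-1} yᵏ ≤ (x - 1)/(y - 1)` is at most `(c₂/(2c₁)) x`, and the `a₀` term
contributes less than `c₂ (√n/2) x`; each half of the right-hand side absorbs one of them.
-/

open Finset

namespace Real

lemma rpow_natCast_div_natCast {x : ℝ} (hx : 0 ≤ x) (k n : ℕ) :
    x ^ ((k : ℝ) / n) = (x ^ (n⁻¹ : ℝ)) ^ k := by
  rw [← rpow_natCast, ← rpow_mul hx, inv_mul_eq_div]

lemma sum_Icc_rpow_div_natCast {x : ℝ} (hx : 0 ≤ x) (hx₁ : x ≠ 1) {n : ℕ} (hn : n ≠ 0) :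
    ∑ k ∈ Icc 1 (n - 1), x ^ ((k : ℝ) / n) = (x - x ^ (n⁻¹ : ℝ)) / (x ^ (n⁻¹ : ℝ) - 1) := by
  have hroot : (x ^ (n⁻¹ : ℝ)) ^ n = x := rpow_inv_natCast_pow hx hn
  have hy₁ : x ^ (n⁻¹ : ℝ) ≠ 1 := fun h => hx₁ (by rw [← hroot, h, one_pow])
  have hIcc : Icc 1 (n - 1) = Ico 1 n := by ext; simp only [mem_Icc, mem_Ico]; omega
  simp_rw [hIcc, rpow_natCast_div_natCast hx]
  rw [geom_sum_Ico hy₁ (Nat.one_le_iff_ne_zero.2 hn), hroot, pow_one]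

lemma sum_Icc_rpow_div_natCast_le {x : ℝ} (hx : 1 < x) {n : ℕ} (hn : n ≠ 0) :
    ∑ k ∈ Icc 1 (n - 1), x ^ ((k : ℝ) / n) ≤ (x - 1) / (x ^ (n⁻¹ : ℝ) - 1) := by
  have hy : 1 < x ^ (n⁻¹ : ℝ) := one_lt_rpow hx (by positivity)
  rw [sum_Icc_rpow_div_natCast (by linarith) hx.ne' hn]
  gcongr

lemma sum_Icc_rpow_div_natCast_le_div {x b : ℝ} (hb : 0 < b) {n : ℕ} (hn : n ≠ 0)
    (hx : (1 + b) ^ n ≤ x) :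
    ∑ k ∈ Icc 1 (n - 1), x ^ ((k : ℝ) / n) ≤ x / b := by
  have hx₀ : 0 ≤ x := le_trans (by positivity) hx
  have hroot : 1 + b ≤ x ^ (n⁻¹ : ℝ) := by
    rwa [le_rpow_inv_iff_of_pos (by positivity) hx₀ (by positivity), rpow_natCast]
  have hx₁ : 1 < x := lt_of_lt_of_le (one_lt_pow₀ (by linarith) hn) hx
  calc ∑ k ∈ Icc 1 (n - 1), x ^ ((k : ℝ) / n) ≤ (x - 1) / (x ^ (n⁻¹ : ℝ) - 1) :=
        sum_Icc_rpow_div_natCast_le hx₁ hn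
    _ ≤ x / b := div_le_div₀ hx₀ (by linarith) hb (by linarith)

end Real

/-- Key deterministic estimate in the Rouché argument: for `c₁ ≥ c₂ > 0`, `ρ ∈ (0,1)` and
large `n`, if `a ≥ ((c₂ + 2c₁)/(c₂ρ))^n`, `1 ≤ aₖ ≤ a^(k/n)` for `1 ≤ k ≤ n-1`, and
`a₀ < (√n/2)(c₂/c₁)((c₂+2c₁)/c₂)^n`, then
`c₁√n (a₀ (c₂/c₁)(1/√n) + ∑_{k=1}^{n-1} (aρ^n)^(k/n)) < c₂√n · aρ^n`. -/
theorem stmt12 (c₁ c₂ ρ : ℝ) (hc : c₁ ≥ c₂) (hc₂ : 0 < c₂) (hρ : ρ ∈ Set.Ioo (0 : ℝ) 1) :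
    ∃ N : ℕ, ∀ n : ℕ, N ≤ n → ∀ a a₀ : ℝ, ∀ ak : ℕ → ℝ,
      ((c₂ + 2 * c₁) / (c₂ * ρ)) ^ n ≤ a →
      (∀ k : ℕ, 1 ≤ k → k ≤ n - 1 → 1 ≤ ak k ∧ ak k ≤ a ^ ((k : ℝ) / n)) →
      a₀ < (Real.sqrt n / 2) * (c₂ / c₁) * ((c₂ + 2 * c₁) / c₂) ^ n →
      c₁ * Real.sqrt n *
          (a₀ * (c₂ / c₁) * (1 / Real.sqrt n) +
            ∑ k ∈ Finset.Icc 1 (n - 1), (a * ρ ^ n) ^ ((k : ℝ) / n))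
        < c₂ * Real.sqrt n * (a * ρ ^ n) := by
  have hc₁ : 0 < c₁ := hc₂.trans_le hc
  refine ⟨1, fun n hn a a₀ _ ha _ ha₀ => ?_⟩
  have hn₀ : n ≠ 0 := Nat.one_le_iff_ne_zero.1 hn
  have hsqrt : 0 < Real.sqrt n := Real.sqrt_pos.2 (by exact_mod_cast hn)
  have hx : ((c₂ + 2 * c₁) / c₂) ^ n ≤ a * ρ ^ n := by
    rwa [div_mul_eq_div_div, div_pow, div_le_iff₀ (pow_pos hρ.1 n)] at ha
  have hsum : ∑ k ∈ Finset.Icc 1 (n - 1), (a * ρ ^ n) ^ ((k : ℝ) / n)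
      ≤ a * ρ ^ n / (2 * c₁ / c₂) :=
    Real.sum_Icc_rpow_div_natCast_le_div (by positivity) hn₀
      (by rwa [show 1 + 2 * c₁ / c₂ = (c₂ + 2 * c₁) / c₂ by field_simp])
  have hratio : c₂ / c₁ ≤ 1 := (div_le_one hc₁).2 hc
  calc c₁ * Real.sqrt n * (a₀ * (c₂ / c₁) * (1 / Real.sqrt n) +
          ∑ k ∈ Finset.Icc 1 (n - 1), (a * ρ ^ n) ^ ((k : ℝ) / n))
      = c₂ * a₀ + c₁ * Real.sqrt n *
          ∑ k ∈ Finset.Icc 1 (n - 1), (a * ρ ^ n) ^ ((k : ℝ) / n) := by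
        field_simp
    _ < c₂ * (Real.sqrt n / 2 * 1 * (a * ρ ^ n)) +
          c₁ * Real.sqrt n * (a * ρ ^ n / (2 * c₁ / c₂)) := by
        refine add_lt_add_of_lt_of_le ?_ (by gcongr)
        gcongr
        exact ha₀.trans_le (by gcongr)
    _ = c₂ * Real.sqrt n * (a * ρ ^ n) := by
        field_simp
        ring
end
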